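/- If scarf(I) ≥ q − 1 (including the case scarf(I) = ∞), then Q/I has a minimal pivot resolution: either the Taylor complex T itself is a minimal free resolution of Q/I, or there exist indices 1 ≤ i_1 < ⋯ < i_l ≤ q such that the pivot complex T_{i_1,…,i_l} is a resolution of Q/I whose differential satisfies ∂((T_{i_1,…,i_l})_i) ⊆ 𝔪(T_{i_1,…,i_l})_{i−1} for all i, where 𝔪 = (x_1,…,x_n). In particular, if q ≤ 3 then Q/I has a minimal pivot resolution. -/

import Mathlib

open MvPolynomial Finset

noncomputable section

/-- `fsign A B` is `0` if `A ∩ B ≠ ∅`, and otherwise `(−1)^{p(A,B)}` where `p(A,B)`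
is the number of pairs `(a,b) ∈ A × B` with `a > b`. -/
def fsign {α : Type*} [LinearOrder α] [DecidableEq α] (A B : Finset α) : ℤ :=
  if A ∩ B = ∅ then (-1 : ℤ) ^ (((A ×ˢ B).filter fun p => p.2 < p.1).card) else 0

/-- The total module underlying the Taylor complex: free over `Q = k[x_1,…,x_n]`
with basis `ε_τ` indexed by all subsets `τ ⊆ [q]`. -/
abbrev TotMod (k : Type*) [Field k] (n q : ℕ) : Type _ :=
  Finset (Fin q) →₀ MvPolynomial (Fin n) k

/-- `m_τ = lcm{m_i : i ∈ τ}`, where `m_i` is the monomial with exponent vector `D i`. -/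
def lcmMono (k : Type*) [Field k] (n q : ℕ) (D : Fin q → (Fin n →₀ ℕ))
    (τ : Finset (Fin q)) : MvPolynomial (Fin n) k :=
  monomial (τ.sup D) (1 : k)

/-- The monomial ideal `I = (m_1, …, m_q)`. -/
def monIdeal (k : Type*) [Field k] (n q : ℕ) (D : Fin q → (Fin n →₀ ℕ)) :
    Ideal (MvPolynomial (Fin n) k) :=
  Ideal.span (Set.range fun i => monomial (D i) (1 : k))

/-- The Taylor differential `∂(ε_τ) = Σ_{j∈τ} sign(j, τ∖{j}) (m_τ/m_{τ∖{j}}) ε_{τ∖{j}}`,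
as a linear endomorphism of the total module. -/
def taylorD (k : Type*) [Field k] (n q : ℕ) (D : Fin q → (Fin n →₀ ℕ)) :
    TotMod k n q →ₗ[MvPolynomial (Fin n) k] TotMod k n q :=
  Finsupp.linearCombination _ fun τ =>
    ∑ j ∈ τ, Finsupp.single (τ \ {j})
      ((fsign {j} (τ \ {j}) : MvPolynomial (Fin n) k) *
        monomial (τ.sup D - (τ \ {j}).sup D) (1 : k))

/-- The degree-`i` piece of the subcomplex of the Taylor complex spanned by the
`ε_τ` with `τ ∈ Ω`: the free submodule with basis `{ε_τ : τ ∈ Ω, |τ| = i}`. -/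
def piece (k : Type*) [Field k] (n q : ℕ) (Ω : Set (Finset (Fin q))) (i : ℕ) :
    Submodule (MvPolynomial (Fin n) k) (TotMod k n q) :=
  Finsupp.supported _ _ {τ | τ ∈ Ω ∧ τ.card = i}

/-- The subcomplex of the Taylor complex spanned by all `ε_τ` with `τ ∈ Ω`. -/
def subcx (k : Type*) [Field k] (n q : ℕ) (Ω : Set (Finset (Fin q))) :
    Submodule (MvPolynomial (Fin n) k) (TotMod k n q) :=
  Finsupp.supported _ _ Ω

/-- The index family of the pivot complex `T_S`: all `τ` with `τ ⊉ S`. -/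
def pivotΩ {q : ℕ} (S : Finset (Fin q)) : Set (Finset (Fin q)) := {τ | ¬ S ⊆ τ}

/-- The subcomplex of the Taylor complex spanned by `{ε_τ : τ ∈ Ω}` is a resolution
of `Q/I`: it is exact in homological degrees `≥ 1`, and its zeroth homology is
identified with `Q/I` via the augmentation `ε_∅ ↦ 1`. -/
def IsResolutionOf (k : Type*) [Field k] (n q : ℕ) (D : Fin q → (Fin n →₀ ℕ))
    (Ω : Set (Finset (Fin q))) : Prop :=
  (∀ i : ℕ, ∀ x ∈ piece k n q Ω (i + 1), taylorD k n q D x = 0 →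
      ∃ y ∈ piece k n q Ω (i + 2), taylorD k n q D y = x) ∧
  (∀ x ∈ piece k n q Ω 0,
      (x (∅ : Finset (Fin q)) ∈ monIdeal k n q D ↔
        ∃ y ∈ piece k n q Ω 1, taylorD k n q D y = x))

/-- The Scarf set of `I`: all `t` such that there are two distinct subsets
`τ ≠ τ'` of `[q]` with `|τ| = t` and `m_τ = m_{τ'}`.  The Scarf number of `I`
is `sInf` of this set; `scarf(I) = ∞` corresponds to this set being empty. -/
def scarfSet (k : Type*) [Field k] (n q : ℕ) (D : Fin q → (Fin n →₀ ℕ)) : Set ℕ :=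
  {t | ∃ τ τ' : Finset (Fin q), τ ≠ τ' ∧ τ.card = t ∧
        lcmMono k n q D τ = lcmMono k n q D τ'}

end

/-- The subcomplex of the Taylor complex indexed by `Ω` is minimal:
`∂((T_Ω)_{i+1}) ⊆ 𝔪 (T_Ω)_i` where `𝔪 = (x_1, …, x_n)`. -/
def IsMinimalCx (k : Type*) [Field k] (n q : ℕ) (D : Fin q → (Fin n →₀ ℕ))
    (Ω : Set (Finset (Fin q))) : Prop :=
  ∀ i : ℕ, ∀ x ∈ piece k n q Ω (i + 1),
    taylorD k n q D x ∈
      (Ideal.span (Set.range (X : Fin n → MvPolynomial (Fin n) k))) • piece k n q Ω i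

section Signs
variable {α : Type*} [LinearOrder α] [DecidableEq α]

lemma fsign_singleton' (x : α) (A : Finset α) (hx : x ∉ A) :
    fsign {x} A = (-1 : ℤ) ^ ((A.filter (· < x)).card) := by
  unfold fsign
  rw [if_pos (Finset.singleton_inter_of_notMem hx)]
  congr 1
  rw [Finset.singleton_product, Finset.filter_map, Finset.card_map]
  rfl

lemma fsign_singleton_zero (x : α) (A : Finset α) (hx : x ∈ A) :
    fsign {x} A = 0 := by
  unfold fsign
  rw [if_neg]
  simp [Finset.eq_empty_iff_forall_notMem]
  exact hx

lemma fsign_mul_self (x : α) (A : Finset α) (hx : x ∉ A) :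
    fsign {x} A * fsign {x} A = 1 := by
  rw [fsign_singleton' x A hx, ← pow_add]
  exact (neg_one_pow_eq_one_iff_even (by norm_num)).2 (Even.add_self _)

lemma fsign_insert (x y : α) (A : Finset α) (hx : x ∉ A) (hxy : x ≠ y) (hy : y ∉ A) :
    fsign {x} (insert y A) = (if y < x then -1 else 1) * fsign {x} A := by
  have hxi : x ∉ insert y A := by simp [hxy, hx]
  rw [fsign_singleton' x _ hxi, fsign_singleton' x A hx, Finset.filter_insert]
  by_cases h : y < x
  · rw [if_pos h, if_pos h, Finset.card_insert_of_notMem (by simp [hy]), pow_succ]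
    ring
  · rw [if_neg h, if_neg h, one_mul]

lemma fsign_key (w j : α) (τ : Finset α) (hw : w ∉ τ) (hj : j ∈ τ) :
    fsign {w} τ * fsign {j} ((insert w τ) \ {j}) =
      -(fsign {j} (τ \ {j}) * fsign {w} (τ \ {j})) := by
  have hjw : j ≠ w := fun h => hw (h ▸ hj)
  set A := τ.erase j with hA
  have hτA : τ = insert j A := (Finset.insert_erase hj).symm
  have hjA : j ∉ A := Finset.notMem_erase _ _
  have hwA : w ∉ A := fun h => hw (Finset.mem_of_mem_erase h)
  have h1 : τ \ {j} = A := by rw [Finset.sdiff_singleton_eq_erase]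
  have h2 : (insert w τ) \ {j} = insert w A := by
    rw [Finset.sdiff_singleton_eq_erase, Finset.erase_insert_of_ne hjw.symm, hA]
  rw [h1, h2]
  nth_rewrite 1 [hτA]
  rw [fsign_insert w j A hwA hjw.symm hjA, fsign_insert j w A hjA hjw hwA]
  rcases lt_or_gt_of_ne hjw with h | h
  · rw [if_pos h, if_neg (not_lt_of_gt h)]; ring
  · rw [if_neg (not_lt_of_gt h), if_pos h]; ring

end Signs

section Dev
variable {k : Type*} [Field k] {n q : ℕ} (D : Fin q → (Fin n →₀ ℕ))

local notation "R" => MvPolynomial (Fin n) k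

/-- basis monomial elements -/
noncomputable def bE (τ : Finset (Fin q)) (b : Fin n →₀ ℕ) : TotMod k n q :=
  Finsupp.single τ (monomial b (1 : k))

lemma taylorD_single (τ : Finset (Fin q)) (p : R) :
    taylorD k n q D (Finsupp.single τ p) =
      ∑ j ∈ τ, Finsupp.single (τ \ {j})
        (p * ((fsign {j} (τ \ {j}) : R) * monomial (τ.sup D - (τ \ {j}).sup D) (1 : k))) := by
  rw [taylorD, Finsupp.linearCombination_single, Finset.smul_sum]
  refine Finset.sum_congr rfl fun j hj => ?_
  rw [Finsupp.smul_single, smul_eq_mul]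

lemma taylorD_bE (τ : Finset (Fin q)) (b : Fin n →₀ ℕ) :
    taylorD k n q D (bE τ b) =
      ∑ j ∈ τ, (fsign {j} (τ \ {j})) •
        bE (τ \ {j}) (b + (τ.sup D - (τ \ {j}).sup D)) := by
  simp only [bE]
  rw [taylorD_single]
  refine Finset.sum_congr rfl fun j hj => ?_
  rw [← Int.cast_smul_eq_zsmul R, Finsupp.smul_single, smul_eq_mul]
  congr 1
  rw [mul_left_comm, monomial_mul, one_mul]

end Dev

section Dev2
variable {k : Type*} [Field k] {n q : ℕ} (D : Fin q → (Fin n →₀ ℕ))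
  (v : (Fin n →₀ ℕ) → Fin q)

local notation "R" => MvPolynomial (Fin n) k

/-- basis-level homotopy -/
noncomputable def H0 (τ : Finset (Fin q)) (b : Fin n →₀ ℕ) : TotMod k n q :=
  (fsign {v (b + τ.sup D)} τ) •
    bE (insert (v (b + τ.sup D)) τ) ((b + τ.sup D) - (insert (v (b + τ.sup D)) τ).sup D)

/-- the homotopy as a k-linear map -/
noncomputable def hmt : TotMod k n q →ₗ[k] TotMod k n q :=
  Finsupp.lsum k fun τ => (MvPolynomial.basisMonomials (Fin n) k).constr k (H0 D v τ)

lemma hmt_single_monomial (τ : Finset (Fin q)) (b : Fin n →₀ ℕ) (c : k) :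
    hmt D v (Finsupp.single τ (monomial b c)) = c • H0 (k := k) D v τ b := by
  rw [hmt, Finsupp.lsum_single]
  have h1 : (monomial b c : R) = c • (MvPolynomial.basisMonomials (Fin n) k) b := by
    rw [coe_basisMonomials]
    simp [MvPolynomial.smul_monomial]
  rw [h1, map_smul, Module.Basis.constr_basis]

lemma hmt_bE (τ : Finset (Fin q)) (b : Fin n →₀ ℕ) :
    hmt D v (bE τ b) = H0 (k := k) D v τ b := by
  rw [bE, hmt_single_monomial D v τ b 1, one_smul]

end Dev2

section Dev3
variable {k : Type*} [Field k] {n q : ℕ} (D : Fin q → (Fin n →₀ ℕ))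
  (v : (Fin n →₀ ℕ) → Fin q)

local notation "R" => MvPolynomial (Fin n) k

lemma homotopy_id (hv : ∀ a : Fin n →₀ ℕ, (∃ i, D i ≤ a) → D (v a) ≤ a)
    (τ : Finset (Fin q)) (hτ : τ.Nonempty) (b : Fin n →₀ ℕ) :
    taylorD k n q D (hmt D v (bE τ b)) + hmt D v (taylorD k n q D (bE τ b)) =
      bE (k := k) τ b := by
  obtain ⟨i₀, hi₀⟩ := hτ
  set a := b + τ.sup D with ha
  have hτa : ∀ i ∈ τ, D i ≤ a := fun i hi => le_trans (Finset.le_sup hi) le_add_self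
  have hva : D (v a) ≤ a := hv a ⟨i₀, hτa i₀ hi₀⟩
  set w := v a with hw
  -- the second summand
  have hbj : ∀ j ∈ τ, (b + (τ.sup D - (τ \ {j}).sup D)) + (τ \ {j}).sup D = a := by
    intro j hj
    rw [add_assoc, tsub_add_cancel_of_le (Finset.sup_mono Finset.sdiff_subset)]
  have hsnd : hmt D v (taylorD k n q D (bE τ b)) =
      ∑ j ∈ τ, (fsign {j} (τ \ {j}) * fsign {w} (τ \ {j})) •
        bE (k := k) (insert w (τ \ {j})) (a - (insert w (τ \ {j})).sup D) := by
    rw [taylorD_bE, map_sum]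
    refine Finset.sum_congr rfl fun j hj => ?_
    rw [map_zsmul, hmt_bE, H0]
    rw [hbj j hj, smul_smul]
  -- the first summand
  have hfst : taylorD k n q D (hmt D v (bE τ b)) =
      fsign {w} τ • taylorD k n q D (bE (k := k) (insert w τ) (a - (insert w τ).sup D)) := by
    rw [hmt_bE, H0, ← ha, ← hw, map_zsmul]
  by_cases hwτ : w ∈ τ
  · -- case w ∈ τ : first summand is zero
    rw [hfst, fsign_singleton_zero w τ hwτ, zero_smul, zero_add, hsnd]
    rw [Finset.sum_eq_single_of_mem w hwτ]
    · have h1 : insert w (τ \ {w}) = τ := by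
        rw [Finset.sdiff_singleton_eq_erase, Finset.insert_erase hwτ]
      rw [h1, fsign_mul_self w (τ \ {w}) (by simp), one_smul, ha, add_tsub_cancel_right]
    · intro j hj hjw
      have hwj : w ∈ τ \ {j} := Finset.mem_sdiff.2 ⟨hwτ, by simp [Ne.symm hjw]⟩
      rw [fsign_singleton_zero w _ hwj, mul_zero, zero_smul]
  · -- case w ∉ τ
    have hσa : (insert w τ).sup D ≤ a := by
      refine Finset.sup_le fun i hi => ?_
      rcases Finset.mem_insert.1 hi with h | h
      · exact h ▸ hva
      · exact hτa i h
    have hfst2 : taylorD k n q D (hmt D v (bE τ b)) =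
        bE (k := k) τ b + ∑ j ∈ τ, (fsign {w} τ * fsign {j} ((insert w τ) \ {j})) •
          bE (k := k) (insert w (τ \ {j})) (a - (insert w (τ \ {j})).sup D) := by
      rw [hfst, taylorD_bE, Finset.sum_insert hwτ, smul_add, Finset.smul_sum]
      have hexp : ∀ σ' : Finset (Fin q), σ' ⊆ insert w τ →
          (a - (insert w τ).sup D + ((insert w τ).sup D - σ'.sup D)) = a - σ'.sup D :=
        fun σ' hs => tsub_add_tsub_cancel hσa (Finset.sup_mono hs)
      congr 1
      · have h2 : (insert w τ) \ {w} = τ := by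
          rw [Finset.sdiff_singleton_eq_erase, Finset.erase_insert hwτ]
        rw [h2, hexp τ (Finset.subset_insert _ _), smul_smul,
          fsign_mul_self w τ hwτ, one_smul, ha, add_tsub_cancel_right]
      · refine Finset.sum_congr rfl fun j hj => ?_
        have hjw : j ≠ w := fun h => hwτ (h ▸ hj)
        have h3 : (insert w τ) \ {j} = insert w (τ \ {j}) := by
          rw [Finset.sdiff_singleton_eq_erase, Finset.sdiff_singleton_eq_erase,
            Finset.erase_insert_of_ne hjw.symm]
        rw [smul_smul, hexp _ Finset.sdiff_subset, h3]
    rw [hfst2, hsnd, add_assoc, ← Finset.sum_add_distrib]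
    have hzero : ∀ j ∈ τ, (fsign {w} τ * fsign {j} ((insert w τ) \ {j})) •
          bE (k := k) (insert w (τ \ {j})) (a - (insert w (τ \ {j})).sup D) +
        (fsign {j} (τ \ {j}) * fsign {w} (τ \ {j})) •
          bE (k := k) (insert w (τ \ {j})) (a - (insert w (τ \ {j})).sup D) = 0 := by
      intro j hj
      rw [← add_smul, fsign_key w j τ hwτ hj, neg_add_cancel, zero_smul]
    rw [Finset.sum_congr rfl hzero, Finset.sum_const_zero, add_zero]

end Dev3

section Dev4
variable {k : Type*} [Field k] {n q : ℕ} (D : Fin q → (Fin n →₀ ℕ))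
  (v : (Fin n →₀ ℕ) → Fin q)

local notation "R" => MvPolynomial (Fin n) k

lemma single_monomial_eq_smul (τ : Finset (Fin q)) (b : Fin n →₀ ℕ) (c : k) :
    Finsupp.single τ (monomial b c) = c • bE (k := k) τ b := by
  rw [bE, Finsupp.smul_single, MvPolynomial.smul_monomial, smul_eq_mul, mul_one]

lemma L_single (hv : ∀ a : Fin n →₀ ℕ, (∃ i, D i ≤ a) → D (v a) ≤ a)
    (τ : Finset (Fin q)) (hτ : τ.Nonempty) (p : R) :
    taylorD k n q D (hmt D v (Finsupp.single τ p)) +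
      hmt D v (taylorD k n q D (Finsupp.single τ p)) = Finsupp.single τ p := by
  induction p using MvPolynomial.induction_on' with
  | monomial b c =>
    rw [single_monomial_eq_smul]
    simp only [LinearMap.map_smul_of_tower]
    rw [← smul_add, homotopy_id D v hv τ hτ b]
  | add p₁ p₂ h1 h2 =>
    have : Finsupp.single τ (p₁ + p₂) = Finsupp.single τ p₁ + Finsupp.single τ p₂ :=
      Finsupp.single_add τ p₁ p₂
    rw [this, map_add, map_add, map_add, map_add]
    rw [show ∀ a b c d : TotMod k n q, a + b + (c + d) = (a + c) + (b + d) by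
      intros; abel]
    rw [h1, h2]

lemma x_eq_sum_single (x : TotMod k n q) :
    x = ∑ τ ∈ x.support, Finsupp.single τ (x τ) := by
  conv_lhs => rw [← Finsupp.sum_single x]
  rfl

lemma L_eq (hv : ∀ a : Fin n →₀ ℕ, (∃ i, D i ≤ a) → D (v a) ≤ a)
    (x : TotMod k n q) (hx : ∀ τ ∈ x.support, τ.Nonempty) :
    taylorD k n q D (hmt D v x) + hmt D v (taylorD k n q D x) = x := by
  conv_lhs => rw [x_eq_sum_single x]
  conv_rhs => rw [x_eq_sum_single x]
  rw [map_sum, map_sum, map_sum, map_sum, ← Finset.sum_add_distrib]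
  exact Finset.sum_congr rfl fun τ hτ => L_single D v hv τ (hx τ hτ) (x τ)

lemma hmt_mem_piece (Ω : Set (Finset (Fin q))) (i : ℕ)
    (hcond : ∀ τ (b : Fin n →₀ ℕ), τ ∈ Ω → τ.card = i + 1 →
      v (b + τ.sup D) ∉ τ → insert (v (b + τ.sup D)) τ ∈ Ω)
    (x : TotMod k n q) (hx : x ∈ piece k n q Ω (i + 1)) :
    hmt D v x ∈ piece k n q Ω (i + 2) := by
  rw [piece, Finsupp.mem_supported] at hx
  rw [piece]
  have hx2 : hmt D v x = ∑ τ ∈ x.support, hmt D v (Finsupp.single τ (x τ)) := by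
    conv_lhs => rw [x_eq_sum_single x]
    rw [map_sum]
  rw [hx2]
  refine Submodule.sum_mem _ fun τ hτ => ?_
  have hτΩ : τ ∈ Ω ∧ τ.card = i + 1 := hx hτ
  -- it suffices to prove membership for every polynomial coefficient
  induction (x τ) using MvPolynomial.induction_on' with
  | monomial b c =>
    rw [single_monomial_eq_smul, LinearMap.map_smul_of_tower]
    refine Submodule.smul_of_tower_mem _ c ?_
    rw [hmt_bE, H0]
    by_cases hw : v (b + τ.sup D) ∈ τ
    · rw [fsign_singleton_zero _ _ hw, zero_smul]
      exact Submodule.zero_mem _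
    · rw [← Int.cast_smul_eq_zsmul (MvPolynomial (Fin n) k)]
      refine Submodule.smul_mem _ _ ?_
      simp only [bE]
      refine Finsupp.single_mem_supported _ _ ?_
      exact ⟨hcond τ b hτΩ.1 hτΩ.2 hw, by rw [Finset.card_insert_of_notMem hw, hτΩ.2]⟩
  | add p₁ p₂ h1 h2 =>
    rw [Finsupp.single_add, map_add]
    exact Submodule.add_mem _ h1 h2

end Dev4

section Dev5
variable {k : Type*} [Field k] {n q : ℕ} (D : Fin q → (Fin n →₀ ℕ))
  (v : (Fin n →₀ ℕ) → Fin q)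

local notation "R" => MvPolynomial (Fin n) k

/-- exactness in positive degrees, for any Ω closed under the homotopy -/
lemma resolution_pos (hv : ∀ a : Fin n →₀ ℕ, (∃ i, D i ≤ a) → D (v a) ≤ a)
    (Ω : Set (Finset (Fin q))) (i : ℕ)
    (hcond : ∀ τ (b : Fin n →₀ ℕ), τ ∈ Ω → τ.card = i + 1 →
      v (b + τ.sup D) ∉ τ → insert (v (b + τ.sup D)) τ ∈ Ω)
    (x : TotMod k n q) (hx : x ∈ piece k n q Ω (i + 1))
    (hd : taylorD k n q D x = 0) :
    ∃ y ∈ piece k n q Ω (i + 2), taylorD k n q D y = x := by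
  refine ⟨hmt D v x, hmt_mem_piece D v Ω i hcond x hx, ?_⟩
  have h0 : hmt D v (taylorD k n q D x) = 0 := by rw [hd, map_zero]
  have hsupp : ∀ τ ∈ x.support, τ.Nonempty := by
    intro τ hτ
    rw [piece, Finsupp.mem_supported] at hx
    have := hx hτ
    rw [← Finset.card_pos, this.2]
    omega
  have := L_eq D v hv x hsupp
  rw [h0, add_zero] at this
  exact this

lemma fsign_singleton_empty (x : Fin q) : fsign {x} (∅ : Finset (Fin q)) = 1 := by
  rw [fsign_singleton' x ∅ (Finset.notMem_empty x)]
  simp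

lemma taylorD_single_singleton (i : Fin q) (p : R) :
    taylorD k n q D (Finsupp.single {i} p) =
      Finsupp.single (∅ : Finset (Fin q)) (p * monomial (D i) (1 : k)) := by
  rw [taylorD_single, Finset.sum_singleton]
  have h1 : ({i} : Finset (Fin q)) \ {i} = ∅ := Finset.sdiff_self _
  rw [h1, fsign_singleton_empty]
  congr 1
  rw [Finset.sup_singleton, Finset.sup_empty, Int.cast_one, one_mul, bot_eq_zero, tsub_zero]

/-- the degree-zero homology condition -/
lemma resolution_zero (Ω : Set (Finset (Fin q))) (hem : ∅ ∈ Ω)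
    (hsing : ∀ i : Fin q, ({i} : Finset (Fin q)) ∈ Ω)
    (x : TotMod k n q) (hx : x ∈ piece k n q Ω 0) :
    (x (∅ : Finset (Fin q)) ∈ monIdeal k n q D ↔
      ∃ y ∈ piece k n q Ω 1, taylorD k n q D y = x) := by
  rw [piece, Finsupp.mem_supported] at hx
  have hxs : x = Finsupp.single ∅ (x ∅) := by
    rw [← Finsupp.support_subset_singleton]
    intro τ hτ
    have := hx hτ
    simp only [Set.mem_setOf_eq, Finset.card_eq_zero] at this
    simp [this.2]
  constructor
  · intro hmem
    rw [monIdeal, Ideal.span] at hmem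
    rw [Finsupp.mem_span_range_iff_exists_finsupp] at hmem
    obtain ⟨c, hc⟩ := hmem
    refine ⟨∑ i ∈ c.support, Finsupp.single ({i} : Finset (Fin q)) (c i), ?_, ?_⟩
    · rw [piece]
      refine Submodule.sum_mem _ fun i hi => ?_
      exact Finsupp.single_mem_supported _ _ ⟨hsing i, Finset.card_singleton i⟩
    · rw [map_sum]
      simp only [taylorD_single_singleton]
      rw [← Finsupp.single_finset_sum]
      conv_rhs => rw [hxs]
      rw [← hc]
      congr 1
      
  · rintro ⟨y, hy, rfl⟩
    rw [piece, Finsupp.mem_supported] at hy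
    have hy2 : taylorD k n q D y =
        ∑ τ ∈ y.support, taylorD k n q D (Finsupp.single τ (y τ)) := by
      conv_lhs => rw [x_eq_sum_single y]
      rw [map_sum]
    rw [hy2, Finsupp.finset_sum_apply]
    refine Ideal.sum_mem _ fun τ hτ => ?_
    obtain ⟨i, rfl⟩ : ∃ i : Fin q, τ = {i} := by
      have := hy hτ
      exact Finset.card_eq_one.1 this.2
    rw [taylorD_single_singleton, Finsupp.single_eq_same]
    exact Ideal.mul_mem_left _ _ (Ideal.subset_span ⟨i, rfl⟩)

end Dev5

section Dev6
variable {k : Type*} [Field k] {n q : ℕ} (D : Fin q → (Fin n →₀ ℕ))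

local notation "R" => MvPolynomial (Fin n) k

lemma minimal_of (Ω : Set (Finset (Fin q)))
    (hdown : ∀ τ ∈ Ω, ∀ j : Fin q, τ \ {j} ∈ Ω)
    (hnc : ∀ τ ∈ Ω, ∀ j ∈ τ, τ.sup D ≠ (τ \ {j}).sup D) :
    IsMinimalCx k n q D Ω := by
  classical
  intro i x hx
  rw [piece, Finsupp.mem_supported] at hx
  have h2 : taylorD k n q D x =
      ∑ τ ∈ x.support, taylorD k n q D (Finsupp.single τ (x τ)) := by
    conv_lhs => rw [x_eq_sum_single x]
    rw [map_sum]
  rw [h2]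
  refine Submodule.sum_mem _ fun τ hτ => ?_
  obtain ⟨hτΩ, hτc⟩ := hx hτ
  rw [taylorD_single]
  refine Submodule.sum_mem _ fun j hj => ?_
  have hle : (τ \ {j}).sup D ≤ τ.sup D := Finset.sup_mono Finset.sdiff_subset
  have hdne : τ.sup D - (τ \ {j}).sup D ≠ 0 := by
    intro h0
    exact hnc τ hτΩ j hj (le_antisymm (tsub_eq_zero_iff_le.1 h0) hle)
  obtain ⟨l, hl⟩ : ∃ l, (τ.sup D - (τ \ {j}).sup D) l ≠ 0 := by
    by_contra hcon; push_neg at hcon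
    exact hdne (Finsupp.ext hcon)
  have hsplit : Finsupp.single (τ \ {j})
        ((x τ) * ((fsign {j} (τ \ {j}) : R) * monomial (τ.sup D - (τ \ {j}).sup D) 1))
      = (monomial (τ.sup D - (τ \ {j}).sup D) (1:k)) •
        Finsupp.single (τ \ {j}) ((fsign {j} (τ \ {j}) : R) * x τ) := by
    rw [Finsupp.smul_single, smul_eq_mul]
    congr 1
    ring
  rw [hsplit]
  refine Submodule.smul_mem_smul ?_ ?_
  · have himg : Set.range (X : Fin n → R) = X '' Set.univ := by rw [Set.image_univ]
    rw [himg, mem_ideal_span_X_image]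
    intro m hm
    rw [support_monomial, if_neg (one_ne_zero)] at hm
    rw [Finset.mem_singleton] at hm
    subst hm
    exact ⟨l, Set.mem_univ l, hl⟩
  · rw [piece]
    refine Finsupp.single_mem_supported _ _ ⟨hdown τ hτΩ j, ?_⟩
    rw [Finset.sdiff_singleton_eq_erase, Finset.card_erase_of_mem hj, hτc]
    omega

lemma sup_eq_of_lcm_eq {τ τ' : Finset (Fin q)}
    (h : lcmMono k n q D τ = lcmMono k n q D τ') : τ.sup D = τ'.sup D := by
  rw [lcmMono, lcmMono] at h
  rcases (monomial_eq_monomial_iff _ _ _ _).1 h with ⟨h1, _⟩ | ⟨h1, _⟩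
  · exact h1
  · exact absurd h1 one_ne_zero

lemma coincidence_univ (hsc : ∀ t ∈ scarfSet k n q D, q - 1 ≤ t)
    {τ : Finset (Fin q)} {j : Fin q} (hj : j ∈ τ) (he : τ.sup D = (τ \ {j}).sup D) :
    τ = Finset.univ := by
  have hnotin : j ∉ τ \ {j} := by simp
  have hne : τ \ {j} ≠ τ := fun h => hnotin (h.symm ▸ hj)
  have hmem : (τ \ {j}).card ∈ scarfSet k n q D :=
    ⟨τ \ {j}, τ, hne, rfl, by rw [lcmMono, lcmMono, he]⟩
  have h1 := hsc _ hmem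
  have hcard : (τ \ {j}).card = τ.card - 1 := by
    rw [Finset.sdiff_singleton_eq_erase, Finset.card_erase_of_mem hj]
  have h2 : τ.card ≤ q := le_trans (Finset.card_le_univ τ) (by simp)
  have h3 : 1 ≤ τ.card := Finset.card_pos.2 ⟨j, hj⟩
  have hq1 : 1 ≤ q := j.pos
  refine Finset.eq_univ_of_card τ ?_
  rw [Fintype.card_fin]
  omega

lemma singleton_lcm_dvd {i j : Fin q} (h : D i ≤ D j) :
    lcmMono k n q D {i} ∣ lcmMono k n q D {j} := by
  rw [lcmMono, lcmMono, Finset.sup_singleton, Finset.sup_singleton]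
  exact ⟨monomial (D j - D i) 1, by rw [monomial_mul, one_mul, add_tsub_cancel_of_le h]⟩

lemma scarf_two (hne : ∀ i : Fin q, D i ≠ 0)
    (hmin : ∀ i j : Fin q, i ≠ j → ¬ lcmMono k n q D {i} ∣ lcmMono k n q D {j}) :
    ∀ t ∈ scarfSet k n q D, 2 ≤ t := by
  rintro t ⟨τ, τ', hneq, rfl, hlcm⟩
  have hsup : τ.sup D = τ'.sup D := sup_eq_of_lcm_eq D hlcm
  by_contra hcon
  push_neg at hcon
  interval_cases h : τ.card
  · -- τ = ∅
    have hτ : τ = ∅ := Finset.card_eq_zero.1 h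
    subst hτ
    obtain ⟨i, hi⟩ : τ'.Nonempty := Finset.nonempty_iff_ne_empty.2 (Ne.symm hneq)
    have hle0 : D i ≤ (∅ : Finset (Fin q)).sup D := hsup ▸ Finset.le_sup hi
    rw [Finset.sup_empty, bot_eq_zero] at hle0
    exact hne i (nonpos_iff_eq_zero.1 hle0)
  · -- τ = {i}
    obtain ⟨i, hi⟩ := Finset.card_eq_one.1 h
    subst hi
    rw [Finset.sup_singleton] at hsup
    obtain ⟨jj, hjj, hjji⟩ : ∃ jj ∈ τ', jj ≠ i := by
      by_contra hc
      push_neg at hc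
      have hsub : τ' ⊆ {i} := fun z hz => Finset.mem_singleton.2 (hc z hz)
      rcases Finset.subset_singleton_iff.1 hsub with h0 | h0
      · subst h0
        rw [Finset.sup_empty, bot_eq_zero] at hsup
        exact hne i hsup
      · exact hneq h0.symm
    have hle : D jj ≤ D i := hsup ▸ Finset.le_sup hjj
    exact hmin jj i hjji (singleton_lcm_dvd D hle)

lemma q_ge_three (hne : ∀ i : Fin q, D i ≠ 0)
    (hmin : ∀ i j : Fin q, i ≠ j → ¬ lcmMono k n q D {i} ∣ lcmMono k n q D {j})
    (j : Fin q) (he : (Finset.univ : Finset (Fin q)).sup D = (Finset.univ \ {j}).sup D) :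
    3 ≤ q := by
  have hq1 : 1 ≤ q := j.pos
  have hDj : D j ≤ (Finset.univ \ {j}).sup D := he ▸ Finset.le_sup (Finset.mem_univ j)
  have hcard : (Finset.univ \ {j}).card = q - 1 := by
    rw [Finset.sdiff_singleton_eq_erase, Finset.card_erase_of_mem (Finset.mem_univ j),
      Finset.card_univ, Fintype.card_fin]
  by_contra hcon
  push_neg at hcon
  interval_cases q
  · -- q = 1
    have h0 : (Finset.univ \ {j}) = ∅ := Finset.card_eq_zero.1 (by omega)
    rw [h0, Finset.sup_empty, bot_eq_zero] at hDj
    exact hne j (nonpos_iff_eq_zero.1 hDj)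
  · -- q = 2
    obtain ⟨i, hi⟩ := Finset.card_eq_one.1 (show (Finset.univ \ {j}).card = 1 by omega)
    have hij : i ≠ j := by
      have : i ∈ Finset.univ \ {j} := hi ▸ Finset.mem_singleton_self i
      simpa using (Finset.mem_sdiff.1 this).2
    rw [hi, Finset.sup_singleton] at hDj
    exact hmin j i (Ne.symm hij) (singleton_lcm_dvd D hDj)

end Dev6

/-- **Existence of minimal pivot resolutions.**
If `scarf(I) ≥ q − 1` (including the case `scarf(I) = ∞`, which is captured by
requiring `q − 1 ≤ t` for every member `t` of the Scarf set), or, in particular,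
if `q ≤ 3`, then `Q/I` has a minimal pivot resolution: either the Taylor complex
itself (the subcomplex indexed by all subsets) is a minimal resolution of `Q/I`,
or some pivot complex `T_S` with `|S| ≥ 2` is a resolution of `Q/I` which is
minimal. -/
theorem exists_minimal_pivot_resolution {k : Type*} [Field k] {n q : ℕ}
    (D : Fin q → (Fin n →₀ ℕ))
    (hne : ∀ i : Fin q, D i ≠ 0)
    (hmin : ∀ i j : Fin q, i ≠ j → ¬ lcmMono k n q D {i} ∣ lcmMono k n q D {j})
    (hscarf : (∀ t ∈ scarfSet k n q D, q - 1 ≤ t) ∨ q ≤ 3) :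
    (IsResolutionOf k n q D Set.univ ∧ IsMinimalCx k n q D Set.univ) ∨
    (∃ S : Finset (Fin q), 2 ≤ S.card ∧
      IsResolutionOf k n q D (pivotΩ S) ∧ IsMinimalCx k n q D (pivotΩ S)) := by
  classical
  have hsc : ∀ t ∈ scarfSet k n q D, q - 1 ≤ t := by
    rcases hscarf with h | hq3
    · exact h
    · intro t ht
      have := scarf_two D hne hmin t ht
      omega
  by_cases hq0 : q = 0
  · -- degenerate case: no generators
    subst hq0
    left
    have hzero : ∀ (i : ℕ) (x : TotMod k n 0),
        x ∈ piece k n 0 Set.univ (i + 1) → x = 0 := by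
      intro i x hx
      rw [piece, Finsupp.mem_supported] at hx
      have hsupp : x.support = ∅ := by
        rw [Finset.eq_empty_iff_forall_notMem]
        intro τ hτ
        have h1 := (hx hτ).2
        have h2 : τ = ∅ := Finset.eq_empty_of_forall_notMem (fun a _ => a.elim0)
        rw [h2] at h1
        simp at h1
      exact Finsupp.support_eq_empty.1 hsupp
    refine ⟨⟨?_, ?_⟩, ?_⟩
    · intro i x hx hd
      have := hzero i x hx
      exact ⟨0, Submodule.zero_mem _, by rw [map_zero, this]⟩
    · intro x hx
      exact resolution_zero D Set.univ (Set.mem_univ _) (fun i => i.elim0) x hx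
    · intro i x hx
      rw [hzero i x hx, map_zero]
      exact Submodule.zero_mem _
  · by_cases hcoin : ∃ τ : Finset (Fin q), ∃ j ∈ τ, τ.sup D = (τ \ {j}).sup D
    · -- pivot case
      right
      obtain ⟨τ0, j, hj, he0⟩ := hcoin
      have hτ0 : τ0 = Finset.univ := coincidence_univ D hsc hj he0
      subst hτ0
      have he : (Finset.univ : Finset (Fin q)).sup D = (Finset.univ \ {j}).sup D := he0
      have hq3 : 3 ≤ q := q_ge_three D hne hmin j he
      set S : Finset (Fin q) := Finset.univ \ {j} with hS
      have hScard : 2 ≤ S.card := by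
        rw [hS, Finset.sdiff_singleton_eq_erase,
          Finset.card_erase_of_mem (Finset.mem_univ j), Finset.card_univ, Fintype.card_fin]
        omega
      have hjS : j ∉ S := by simp [hS]
      -- the apex function
      set v : (Fin n →₀ ℕ) → Fin q := fun a =>
        if h : ∃ i, D i ≤ a then (if D j ≤ a then j else h.choose) else j with hv
      have hvspec : ∀ a : Fin n →₀ ℕ, (∃ i, D i ≤ a) → D (v a) ≤ a := by
        intro a ha
        rw [hv]
        simp only
        rw [dif_pos ha]
        by_cases hja : D j ≤ a
        · rw [if_pos hja]; exact hja
        · rw [if_neg hja]; exact ha.choose_spec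
      have huniv : Finset.univ ∉ pivotΩ S := by
        intro hcontra
        exact hcontra (Finset.sdiff_subset)
      have hnc : ∀ τ ∈ pivotΩ S, ∀ j' ∈ τ, τ.sup D ≠ (τ \ {j'}).sup D := by
        intro τ hτ j' hj' heq
        rw [coincidence_univ D hsc hj' heq] at hτ
        exact huniv hτ
      have hdown : ∀ τ ∈ pivotΩ S, ∀ j' : Fin q, τ \ {j'} ∈ pivotΩ S := by
        intro τ hτ j' hcontra
        exact hτ (hcontra.trans Finset.sdiff_subset)
      refine ⟨S, hScard, ⟨?_, ?_⟩, minimal_of D (pivotΩ S) hdown hnc⟩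
      · -- positive-degree exactness for the pivot complex
        intro i x hx hd
        refine resolution_pos D v hvspec (pivotΩ S) i ?_ x hx hd
        intro τ b hτ hcard hw
        have hτne : τ.Nonempty := Finset.card_pos.1 (by omega)
        obtain ⟨i₀, hi₀⟩ := hτne
        have hτa : ∀ s ∈ τ, D s ≤ b + τ.sup D :=
          fun s hs => le_trans (Finset.le_sup hs) le_add_self
        have hex : ∃ i', D i' ≤ b + τ.sup D := ⟨i₀, hτa i₀ hi₀⟩
        intro hsub
        by_cases hja : D j ≤ b + τ.sup D
        · have hva : v (b + τ.sup D) = j := by rw [hv]; simp only; rw [dif_pos hex, if_pos hja]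
          rw [hva] at hsub
          refine hτ (fun s hs => ?_)
          rcases Finset.mem_insert.1 (hsub hs) with h1 | h1
          · exact absurd (h1 ▸ hs) hjS
          · exact h1
        · have hva : D (v (b + τ.sup D)) ≤ b + τ.sup D := hvspec _ hex
          have hSsup : S.sup D ≤ b + τ.sup D := by
            refine Finset.sup_le fun s hs => ?_
            rcases Finset.mem_insert.1 (hsub hs) with h1 | h1
            · exact h1 ▸ hva
            · exact hτa s h1
          have : D j ≤ b + τ.sup D :=
            le_trans (le_trans (Finset.le_sup (Finset.mem_univ j)) (le_of_eq he)) hSsup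
          exact hja this
      · -- homology at degree zero
        intro x hx
        refine resolution_zero D (pivotΩ S) ?_ ?_ x hx
        · intro hcontra
          have h0 := Finset.card_le_card hcontra
          rw [Finset.card_empty] at h0
          omega
        · intro i hcontra
          have h0 := Finset.card_le_card hcontra
          rw [Finset.card_singleton] at h0
          omega
    · -- Taylor complex case
      left
      push_neg at hcoin
      have hq1 : 0 < q := Nat.pos_of_ne_zero hq0
      set v : (Fin n →₀ ℕ) → Fin q := fun a =>
        if h : ∃ i, D i ≤ a then h.choose else ⟨0, hq1⟩ with hv
      have hvspec : ∀ a : Fin n →₀ ℕ, (∃ i, D i ≤ a) → D (v a) ≤ a := by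
        intro a ha
        rw [hv]
        simp only
        rw [dif_pos ha]
        exact ha.choose_spec
      refine ⟨⟨?_, ?_⟩, ?_⟩
      · intro i x hx hd
        exact resolution_pos D v hvspec Set.univ i
          (fun τ b _ _ _ => Set.mem_univ _) x hx hd
      · intro x hx
        exact resolution_zero D Set.univ (Set.mem_univ _) (fun i => Set.mem_univ _) x hx
      · exact minimal_of D Set.univ (fun τ _ j => Set.mem_univ _)
          (fun τ _ j hj => hcoin τ j hj)
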